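/- arXiv:1803.00465 — 2 statements merged into one kernel-verified Lean document; each statement's English description precedes it below -/
import Mathlib

section
/- Let F be a field of characteristic 2, n a natural number, and for each k let FΩ_k be the F-vector space with basis the k-element subsets of {1,...,n}. Define the linear map φ_t^k : FΩ_k → FΩ_{k−t} sending each k-subset Y to the sum of all (k−t)-subsets of Y. Then for all t ≥ 1 and all k, the composite φ_t^k followed by φ_t^{k−t} is the zero map. -/
/-- The free `F`-vector space on the `k`-element subsets of `{1,…,n}` (here `k : ℤ`,
so that the space is zero for `k < 0`). -/
def FOmega (F : Type*) [Field F] (n : ℕ) (k : ℤ) : Type _ :=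
  {s : Finset (Fin n) // (s.card : ℤ) = k} →₀ F

noncomputable instance (F : Type*) [Field F] (n : ℕ) (k : ℤ) :
    AddCommGroup (FOmega F n k) := Finsupp.instAddCommGroup

noncomputable instance (F : Type*) [Field F] (n : ℕ) (k : ℤ) :
    Module F (FOmega F n k) := Finsupp.module _ _

/-- The multistep boundary map `FΩ_a → FΩ_b`, sending a subset `Y` of size `a`
to the sum of all its subsets of size `b` (this is `φ_t^a` with `t = a - b`). -/
noncomputable def phi (F : Type*) [Field F] (n : ℕ) (a b : ℤ) :
    FOmega F n a →ₗ[F] FOmega F n b :=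
  Finsupp.lift _ F _ fun Y =>
    ∑ X ∈ (Y.1.powerset.filter fun X => (X.card : ℤ) = b).attach,
      Finsupp.single ⟨X.1, (Finset.mem_filter.mp X.2).2⟩ (1 : F)

/-! Composing `φ : FΩ_a → FΩ_b` with `φ : FΩ_b → FΩ_c` sends `Y` to `∑_Z N(Z, Y) Z`, where
`N(Z, Y)` counts the `X` of size `b` with `Z ⊆ X ⊆ Y`; choosing `X ∖ Z` inside `Y ∖ Z` gives
`N(Z, Y) = C(a - c, b - c)`, so the composite is `C(a - c, b - c) • φ`. For the two steps of
length `t` this is the central binomial coefficient `C(2t, t)`, which is even when `t ≥ 1`. -/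

open Finset

section

variable {F : Type*} [Field F] {n : ℕ}

namespace FOmega

/- `FOmega` is a plain `def`, so `Finsupp`'s API does not apply to it syntactically; these
two wrappers give basis vectors and coefficients that live in `FOmega` itself. -/
variable (F) in
noncomputable def single {k : ℤ} (Y : {s : Finset (Fin n) // (s.card : ℤ) = k}) :
    FOmega F n k :=
  Finsupp.single Y 1

noncomputable def coeff {k : ℤ} (Z : {s : Finset (Fin n) // (s.card : ℤ) = k}) :
    FOmega F n k →ₗ[F] F :=
  Finsupp.lapply Z

lemma coeff_single {k : ℤ} (Y Z : {s : Finset (Fin n) // (s.card : ℤ) = k}) :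
    coeff Z (single F Y) = if Y = Z then 1 else 0 :=
  Finsupp.single_apply

lemma linearMap_ext {a b : ℤ} {f g : FOmega F n a →ₗ[F] FOmega F n b}
    (h : ∀ Y Z, coeff Z (f (single F Y)) = coeff Z (g (single F Y))) : f = g :=
  Finsupp.lhom_ext' fun Y => LinearMap.ext_ring (Finsupp.ext (h Y))

end FOmega

open FOmega

lemma phi_single (a b : ℤ) (Y : {s : Finset (Fin n) // (s.card : ℤ) = a}) :
    phi F n a b (single F Y) =
      ∑ X ∈ (Y.1.powerset.filter fun X => (X.card : ℤ) = b).attach,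
        single F ⟨X.1, (mem_filter.mp X.2).2⟩ := by
  rw [phi]
  erw [Finsupp.lift_apply, Finsupp.sum_single_index, one_smul]
  · rfl
  · exact zero_smul F _

lemma coeff_phi_single (a b : ℤ) (Y : {s : Finset (Fin n) // (s.card : ℤ) = a})
    (Z : {s : Finset (Fin n) // (s.card : ℤ) = b}) :
    coeff Z (phi F n a b (single F Y)) = if Z.1 ⊆ Y.1 then 1 else 0 := by
  simp only [phi_single, map_sum, coeff_single, Subtype.ext_iff]
  rw [sum_attach _ fun X => if X = Z.1 then (1 : F) else 0, sum_ite_eq']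
  simp [Z.2]

lemma coeff_phi_phi_single (a b c : ℤ) (Y : {s : Finset (Fin n) // (s.card : ℤ) = a})
    (Z : {s : Finset (Fin n) // (s.card : ℤ) = c}) :
    coeff Z (phi F n b c (phi F n a b (single F Y))) =
      #{X ∈ Y.1.powerset | (X.card : ℤ) = b ∧ Z.1 ⊆ X} := by
  rw [phi_single, map_sum, map_sum]
  simp only [coeff_phi_single]
  rw [sum_attach _ fun X => if Z.1 ⊆ X then (1 : F) else 0, sum_boole, filter_filter]

lemma powerset_filter_card_eq_powersetCard {α : Type*} (Y : Finset α) {b : ℤ} (hb : 0 ≤ b) :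
    Y.powerset.filter (fun X => (X.card : ℤ) = b) = Y.powersetCard b.toNat := by
  ext X
  simp only [mem_filter, mem_powerset, mem_powersetCard]
  exact and_congr_right fun _ => by omega

theorem phi_comp_phi (a b c : ℤ) (hcb : c ≤ b) :
    (phi F n b c).comp (phi F n a b) =
      (((a - c).toNat.choose (b - c).toNat : ℕ) : F) • phi F n a c := by
  refine linearMap_ext fun Y Z => ?_
  rw [LinearMap.comp_apply, coeff_phi_phi_single, LinearMap.smul_apply, map_smul,
    coeff_phi_single, smul_eq_mul]
  have hY := Y.2
  have hZ := Z.2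
  split_ifs with hZY
  · rw [mul_one, ← filter_filter, powerset_filter_card_eq_powersetCard _ (by omega),
      card_filter_powersetCard_subset _ _ _ hZY (by omega)]
    congr 2 <;> omega
  · rw [mul_zero, filter_eq_empty_iff.mpr, card_empty, Nat.cast_zero]
    exact fun X hX hXZ => hZY (hXZ.2.trans (mem_powerset.mp hX))

end

/-- over a field of characteristic two, the composite
`φ_t^k : FΩ_k → FΩ_{k-t}` followed by `φ_t^{k-t} : FΩ_{k-t} → FΩ_{k-2t}` is zero,
for every `t ≥ 1`. -/
theorem phi_comp_phi_eq_zero (F : Type*) [Field F] [CharP F 2] (n : ℕ)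
    (t : ℤ) (ht : 1 ≤ t) (k : ℤ) :
    (phi F n (k - t) (k - 2 * t)).comp (phi F n k (k - t)) = 0 := by
  have hchoose : (k - (k - 2 * t)).toNat.choose (k - t - (k - 2 * t)).toNat =
      t.toNat.centralBinom := by
    rw [Nat.centralBinom_eq_two_mul_choose]
    congr 1 <;> omega
  have heven : 2 ∣ t.toNat.centralBinom := Nat.two_dvd_centralBinom_of_one_le (by omega)
  rw [phi_comp_phi _ _ _ (by omega), hchoose, (CharP.cast_eq_zero_iff F 2 _).mpr heven,
    zero_smul]
end

section
/- Let F be a field of characteristic 2 and let γ_k : FΩ_k → FΩ_{k−1} be the one-step boundary map sending each k-subset Y of {1,...,n} to the sum of its (k−1)-subsets. Then the chain complex 0 → FΩ_n → FΩ_{n−1} → ⋯ → FΩ_1 → FΩ_0 → 0 is exact in every degree, i.e., ker γ_k = im γ_{k+1} for all 1 ≤ k ≤ n−1, γ_n is injective, and γ_1 is surjective. -/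
/-!
Over a ring of characteristic two, let `∂` send a finite set `s` to the sum of the sets `s.erase a`,
`a ∈ s`, and let `h_e` send `s` to `insert e s` when `e ∉ s` and to `0` otherwise. Then
`∂ h_e + h_e ∂ = id`: for `e ∈ s` only the term `insert e (s.erase e) = s` survives, and for
`e ∉ s` the terms `insert e (s.erase a)` occur twice and cancel. So `h_e` contracts the complex
`(∂, ∂² = 0)` on the free module over all finite subsets, and since `∂` lowers and `h_e` raises the
size by one, choosing any `e ∈ Fin n` makes every graded piece `FΩ_k` exact, including at the
two ends, where the neighbouring piece is zero.
-/

open Finset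

namespace SubsetComplex

variable {R : Type*} [Ring R] {α : Type*}

lemma single_add_self_of_charTwo [CharP R 2] (s : α) (r : R) :
    Finsupp.single s r + Finsupp.single s r = 0 := by
  rw [← Finsupp.single_add, CharTwo.add_self_eq_zero, Finsupp.single_zero]

variable [DecidableEq α]

noncomputable def boundary : (Finset α →₀ R) →ₗ[R] Finset α →₀ R :=
  Finsupp.lift _ R _ fun s => ∑ a ∈ s, Finsupp.single (s.erase a) 1

noncomputable def cone (e : α) : (Finset α →₀ R) →ₗ[R] Finset α →₀ R :=
  Finsupp.lift _ R _ fun s => if e ∈ s then 0 else Finsupp.single (insert e s) 1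

@[simp] lemma boundary_single_one (s : Finset α) :
    boundary (Finsupp.single s (1 : R)) = ∑ a ∈ s, Finsupp.single (s.erase a) 1 := by
  simp [boundary]

@[simp] lemma cone_single_one (e : α) (s : Finset α) :
    cone e (Finsupp.single s (1 : R)) = if e ∈ s then 0 else Finsupp.single (insert e s) 1 := by
  simp [cone]

lemma cone_mem_supported_succ (e : α) {k : ℤ} {v : Finset α →₀ R}
    (hv : v ∈ Finsupp.supported R R {s : Finset α | (#s : ℤ) = k}) :
    cone e v ∈ Finsupp.supported R R {s : Finset α | (#s : ℤ) = k + 1} := by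
  rw [Finsupp.supported_eq_span_single] at hv
  induction hv using Submodule.span_induction with
  | mem _ h =>
    obtain ⟨s, hs, rfl⟩ := h
    rw [cone_single_one]
    split_ifs with he
    · exact zero_mem _
    · refine Finsupp.single_mem_supported R 1 ?_
      rw [Set.mem_ofPred_eq] at hs ⊢
      rw [card_insert_of_notMem he, Nat.cast_succ, hs]
  | zero => simp
  | add _ _ _ _ h₁ h₂ => simpa using add_mem h₁ h₂
  | smul r _ _ h => simpa using Submodule.smul_mem _ r h

variable [CharP R 2]

lemma boundary_boundary (v : Finset α →₀ R) : boundary (boundary v) = 0 := by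
  suffices (boundary : (Finset α →₀ R) →ₗ[R] _) ∘ₗ boundary = 0 from LinearMap.congr_fun this v
  ext s : 2
  simp only [LinearMap.comp_apply, Finsupp.lsingle_apply, boundary_single_one, map_sum,
    LinearMap.zero_apply, sum_sigma']
  -- the terms indexed by `(a, b)` and `(b, a)` coincide
  refine sum_involution (fun p _ => ⟨p.2, p.1⟩) (fun p _ => ?_) (fun p hp _ h => ?_)
    (fun p hp => ?_) (fun _ _ => rfl)
  · rw [erase_right_comm]
    exact single_add_self_of_charTwo _ _
  · simp only [mem_sigma, mem_erase] at hp
    exact hp.2.1 (congrArg Sigma.fst h)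
  · simp only [mem_sigma, mem_erase] at hp ⊢
    exact ⟨hp.2.2, Ne.symm hp.2.1, hp.1⟩

lemma boundary_cone_add_cone_boundary (e : α) (v : Finset α →₀ R) :
    boundary (cone e v) + cone e (boundary v) = v := by
  suffices boundary ∘ₗ cone e + cone e ∘ₗ boundary = LinearMap.id from
    LinearMap.congr_fun this v
  ext s : 2
  simp only [LinearMap.add_apply, LinearMap.comp_apply, Finsupp.lsingle_apply,
    LinearMap.id_apply, cone_single_one, boundary_single_one, map_sum]
  by_cases he : e ∈ s
  · rw [if_pos he, map_zero, zero_add, sum_eq_single_of_mem e he fun a ha hae => ?_,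
      if_neg (notMem_erase e s), insert_erase he]
    rw [if_pos (mem_erase.2 ⟨Ne.symm hae, he⟩)]
  · have hcomm : ∀ a ∈ s, (insert e s).erase a = insert e (s.erase a) := fun a ha =>
      erase_insert_of_ne fun hea => he (hea ▸ ha)
    rw [if_neg he, boundary_single_one, sum_insert he, erase_insert he, add_assoc,
      ← sum_add_distrib, sum_congr rfl fun a ha => by
        rw [hcomm a ha, if_neg fun h => he (mem_of_mem_erase h), single_add_self_of_charTwo],
      sum_const_zero, add_zero]

end SubsetComplex

lemma Finset.powerset_filter_card_eq_image_erase {α : Type*} [DecidableEq α] {s : Finset α}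
    {b : ℤ} (hs : (#s : ℤ) = b + 1) :
    s.powerset.filter (fun t => (#t : ℤ) = b) = s.image s.erase := by
  ext t
  rw [mem_filter, mem_powerset, mem_image, ← covBy_iff_exists_erase, covBy_iff_card_sdiff_eq_one]
  refine and_congr_right fun hts => ?_
  have := card_le_card hts
  rw [card_sdiff_of_subset hts]
  omega

open SubsetComplex

namespace FOmega

variable {F : Type*} [Field F] {n : ℕ}

noncomputable def inclusion (k : ℤ) : FOmega F n k →ₗ[F] Finset (Fin n) →₀ F :=
  Finsupp.lmapDomain F F Subtype.val

lemma inclusion_injective (k : ℤ) : Function.Injective (inclusion (F := F) (n := n) k) :=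
  Finsupp.mapDomain_injective Subtype.val_injective

lemma range_inclusion (k : ℤ) :
    LinearMap.range (inclusion (F := F) (n := n) k) =
      Finsupp.supported F F {s : Finset (Fin n) | (#s : ℤ) = k} := by
  refine (Finsupp.range_lmapDomain (R := F) Subtype.val).trans ?_
  rw [Finsupp.supported_eq_span_single]
  congr 1
  ext
  simp

lemma subsingleton_of_notMem_Icc {k : ℤ} (hk : k ∉ Set.Icc 0 (n : ℤ)) :
    Subsingleton (FOmega F n k) := by
  have : IsEmpty {s : Finset (Fin n) // (#s : ℤ) = k} := ⟨fun s => by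
    have := card_le_univ s.1
    rw [Fintype.card_fin] at this
    rw [Set.mem_Icc] at hk
    omega⟩
  unfold FOmega
  infer_instance

lemma phi_single_one (a b : ℤ) (Y : {s : Finset (Fin n) // (#s : ℤ) = a}) :
    phi F n a b (Finsupp.single Y 1) =
      ∑ X ∈ (Y.1.powerset.filter fun X => (#X : ℤ) = b).attach,
        Finsupp.single ⟨X.1, (mem_filter.mp X.2).2⟩ (1 : F) := by
  erw [phi, Finsupp.lift_apply, Finsupp.sum_single_index (by simp), one_smul]
  rfl

lemma inclusion_phi {a b : ℤ} (hab : b + 1 = a) (x : FOmega F n a) :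
    inclusion b (phi F n a b x) = boundary (inclusion a x) := by
  suffices inclusion b ∘ₗ phi F n a b = boundary ∘ₗ inclusion a from LinearMap.congr_fun this x
  refine Finsupp.lhom_ext' fun Y => LinearMap.ext_ring ?_
  change Finsupp.mapDomain Subtype.val (phi F n a b (Finsupp.single Y 1)) =
    boundary (Finsupp.mapDomain Subtype.val (Finsupp.single Y 1))
  rw [phi_single_one, Finsupp.mapDomain_finsetSum]
  simp only [Finsupp.mapDomain_single]
  rw [sum_attach _ (fun X => Finsupp.single X (1 : F)), boundary_single_one,
    powerset_filter_card_eq_image_erase (Y.2.trans hab.symm), sum_image (erase_injOn _)]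

variable [CharP F 2]

theorem ker_phi_eq_range_phi (hn : 1 ≤ n) {a b c : ℤ} (hab : b + 1 = a) (hbc : c + 1 = b) :
    LinearMap.ker (phi F n b c) = LinearMap.range (phi F n a b) := by
  let e : Fin n := ⟨0, hn⟩
  apply le_antisymm
  · intro x hx
    have hx : boundary (inclusion b x) = 0 := by
      rw [← inclusion_phi hbc, LinearMap.mem_ker.mp hx, map_zero]
    obtain ⟨y, hy⟩ : cone e (inclusion b x) ∈ LinearMap.range (inclusion a) := by
      rw [range_inclusion, ← hab]
      refine cone_mem_supported_succ e ?_
      rw [← range_inclusion]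
      exact LinearMap.mem_range_self _ x
    refine ⟨y, inclusion_injective b ?_⟩
    rw [inclusion_phi hab, hy]
    simpa [hx] using boundary_cone_add_cone_boundary e (inclusion b x)
  · rintro _ ⟨y, rfl⟩
    rw [LinearMap.mem_ker]
    refine inclusion_injective c ?_
    rw [inclusion_phi hbc, inclusion_phi hab, map_zero, boundary_boundary]

end FOmega

open FOmega in
/-- over a field of characteristic two, the one-step chain complex
`0 → FΩ_n → FΩ_{n-1} → ⋯ → FΩ_1 → FΩ_0 → 0` with maps `γ_k = φ_1^k` is exact in
every degree: `ker γ_k = im γ_{k+1}` for `1 ≤ k ≤ n-1`, `γ_n` is injective and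
`γ_1` is surjective. -/
theorem one_step_complex_exact (F : Type*) [Field F] [CharP F 2] (n : ℕ)
    (hn : 1 ≤ n) :
    (∀ k : ℕ, 1 ≤ k → k ≤ n - 1 →
      LinearMap.ker (phi F n k ((k : ℤ) - 1)) =
        LinearMap.range (phi F n ((k : ℤ) + 1) k)) ∧
    Function.Injective (phi F n n ((n : ℤ) - 1)) ∧
    Function.Surjective (phi F n 1 0) := by
  refine ⟨fun k _ _ => ker_phi_eq_range_phi hn rfl (sub_add_cancel _ _), ?_, ?_⟩
  · have := subsingleton_of_notMem_Icc (F := F) (n := n) (k := n + 1) (by simp)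
    rw [← LinearMap.ker_eq_bot, ker_phi_eq_range_phi hn rfl (sub_add_cancel _ _),
      LinearMap.range_eq_bot]
    exact Subsingleton.elim _ _
  · have := subsingleton_of_notMem_Icc (F := F) (n := n) (k := 0 - 1) (by simp)
    rw [← LinearMap.range_eq_top, ← ker_phi_eq_range_phi hn (zero_add 1) (sub_add_cancel 0 1),
      LinearMap.ker_eq_top]
    exact Subsingleton.elim _ _
end
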